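/- arXiv:math/0511425 — 2 statements merged into one kernel-verified Lean document; each statement's English description precedes it below -/
import Mathlib

section
/- If x = μ^k(z) with z ∈ {011011, 100100}, then x can be written as uvvuvv where u and v are nonempty binary words beginning with different letters. -/
/-! Both choices of `z` have the form `b (!b) (!b) b (!b) (!b)`, so since `μ^k` is a morphism one
can take `u = μ^k(b)` and `v = μ^k(!b)`; these begin with `b` and `!b`, because `μ` preserves the
first letter. -/

/-- The Thue-Morse morphism: μ(0)=01, μ(1)=10, with 0 = `false`, 1 = `true`. -/
def mu (w : List Bool) : List Bool := w.flatMap fun b => [b, !b]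

lemma mu_append (a b : List Bool) : mu (a ++ b) = mu a ++ mu b :=
  List.flatMap_append

lemma mu_iterate_append (k : ℕ) (a b : List Bool) :
    mu^[k] (a ++ b) = mu^[k] a ++ mu^[k] b := by
  induction k generalizing a b with
  | zero => rfl
  | succ k ih => simp only [Function.iterate_succ_apply, mu_append, ih]

lemma head?_mu (w : List Bool) : (mu w).head? = w.head? := by
  cases w <;> rfl

lemma head?_mu_iterate (k : ℕ) (w : List Bool) : (mu^[k] w).head? = w.head? := by
  induction k with
  | zero => rfl
  | succ k ih => rw [Function.iterate_succ_apply', head?_mu, ih]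

lemma mu_iterate_singleton_ne_nil (k : ℕ) (c : Bool) : mu^[k] [c] ≠ [] := by
  intro h
  simpa [h] using head?_mu_iterate k [c]

theorem uvvuvv_factorization (k : ℕ) (z : List Bool)
    (hz : z = [false, true, true, false, true, true] ∨
          z = [true, false, false, true, false, false]) :
    ∃ u v : List Bool, u ≠ [] ∧ v ≠ [] ∧
      mu^[k] z = u ++ v ++ v ++ u ++ v ++ v ∧ u.head? ≠ v.head? := by
  obtain ⟨b, rfl⟩ : ∃ b : Bool, z = [b] ++ [!b] ++ [!b] ++ [b] ++ [!b] ++ [!b] := by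
    rcases hz with rfl | rfl
    exacts [⟨false, rfl⟩, ⟨true, rfl⟩]
  refine ⟨mu^[k] [b], mu^[k] [!b], mu_iterate_singleton_ne_nil k b,
    mu_iterate_singleton_ne_nil k !b, by simp only [mu_iterate_append], ?_⟩
  rw [head?_mu_iterate, head?_mu_iterate]
  simp
end

section
/- Define A_0 = 00 and A_{n+1} = 0·μ²(A_n). Then for all n ≥ 0, A_n is a proper prefix of A_{n+1}. -/
/-- A₀ = 00, Aₙ₊₁ = 0·μ²(Aₙ). -/
def A : ℕ → List Bool
  | 0 => [false, false]
  | n + 1 => false :: mu (mu (A n))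

theorem List.IsPrefix.mu {u v : List Bool} (h : u <+: v) : mu u <+: mu v :=
  h.flatMap _

theorem length_mu (w : List Bool) : (mu w).length = 2 * w.length := by
  induction w with
  | nil => rfl
  | cons b w ih =>
    simp only [mu, List.flatMap_cons, List.length_append] at ih ⊢
    rw [ih]
    simp only [List.length_cons, List.length_nil]
    ring

theorem A_prefix_succ (n : ℕ) : A n <+: A (n + 1) := by
  induction n with
  | zero => decide
  | succ n ih => exact List.cons_prefix_cons.mpr ⟨rfl, ih.mu.mu⟩

theorem length_A_succ (n : ℕ) : (A (n + 1)).length = 4 * (A n).length + 1 := by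
  simp only [A, List.length_cons, length_mu]
  ring

theorem A_proper_prefix (n : ℕ) : A n <+: A (n + 1) ∧ A n ≠ A (n + 1) := by
  refine ⟨A_prefix_succ n, fun h => ?_⟩
  have := congrArg List.length h
  rw [length_A_succ] at this
  omega
end
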